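/- arXiv:1306.1033 — 4 statements merged into one kernel-verified Lean document; each statement's English description precedes it below -/
import Mathlib

section
/- Let λ be a p-quotient-separated partition and i ∈ ℤ/pℤ with q_{i−1}(λ) > q_i(λ). Then λ has at least one addable i-node and no removable i-nodes. -/
/-
Read runner `c` of the abacus through its levels `t ↦ c.val + p * t`. Its beads form a set of
levels that contains all small integers and is bounded above, and `q_c` is `c.val + p * charge`
of that set, where the charge `b + #(beads ≥ b) - #(gaps < b)` does not depend on the base
level `b`. Measuring from the first gap gives `q_c = F_c + p * N_c`, with `F_c` the first space
and `N_c` the number of beads after it. Hence, with `L_c` the last bead,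
`F_c ≤ q_c ≤ max F_c L_c`, and `F_c + p ≤ q_c` as soon as a bead follows `F_c`. Quotient
separation of runners `i - 1` and `i` leaves the two cases `L_{i-1} ≤ F_i` and `L_i ≤ F_{i-1}`,
each settled by comparing `q_i < q_{i-1}` with these bounds.
-/

/-- `f` represents a partition: weakly decreasing with finitely many nonzero parts.
`f r` is the `(r+1)`-th part (0-indexed). -/
def IsPartition (f : ℕ → ℕ) : Prop :=
  (∀ m n : ℕ, m ≤ n → f n ≤ f m) ∧ ∃ N, ∀ n, N ≤ n → f n = 0

/-- `(r, c)` (0-indexed) is a node of the Young diagram of `f`. -/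
def Cell (f : ℕ → ℕ) (r c : ℕ) : Prop := c < f r

/-- The `p`-residue of the node `(r, c)`. -/
def res (p : ℕ) (r c : ℕ) : ZMod p := (c : ZMod p) - (r : ZMod p)

/-- The ramp containing the 0-indexed node `(r, c)`; this equals `c-1+(p-1)(r-1)` in
the paper's 1-indexed convention. -/
def rampOf (p : ℕ) (r c : ℕ) : ℤ := (c : ℤ) + ((p : ℤ) - 1) * (r : ℤ)

/-- `(r, c)` is a removable node of `f`. -/
def Removable (f : ℕ → ℕ) (r c : ℕ) : Prop := c + 1 = f r ∧ f (r + 1) < f r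

/-- `(r, c)` is an addable node of `f`. -/
def Addable (f : ℕ → ℕ) (r c : ℕ) : Prop := c = f r ∧ (r = 0 ∨ f r < f (r - 1))

/-- The set of occupied positions (beads) in the abacus display of the partition `f`:
there is a bead at position `f_j − j` for each `j ≥ 1`. -/
def Occ (f : ℕ → ℕ) : Set ℤ := {x : ℤ | ∃ j : ℕ, x = (f j : ℤ) - ((j : ℤ) + 1)}

/-- `q_i(λ)`: the position of the first vacant position on runner `i` in the abacus
display of the `p`-core of `λ` (computed via the `charge` of runner `i`, which is
invariant under sliding beads up the runner). -/
noncomputable def qpos (p : ℕ) (f : ℕ → ℕ) (i : ZMod p) : ℤ :=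
  (i.val : ℤ) + p *
    ((Set.ncard {x : ℤ | x ∈ Occ f ∧ (x : ZMod p) = i ∧ (i.val : ℤ) ≤ x} : ℤ) -
     (Set.ncard {x : ℤ | x ∉ Occ f ∧ (x : ZMod p) = i ∧ x < (i.val : ℤ)} : ℤ))

/-- The first vacant position on runner `i` of the abacus display of `f`. -/
noncomputable def firstSpace (p : ℕ) (f : ℕ → ℕ) (i : ZMod p) : ℤ :=
  sInf {x : ℤ | (x : ZMod p) = i ∧ x ∉ Occ f}

/-- The last occupied position on runner `i` of the abacus display of `f`. -/
noncomputable def lastBead (p : ℕ) (f : ℕ → ℕ) (i : ZMod p) : ℤ :=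
  sSup {x : ℤ | (x : ZMod p) = i ∧ x ∈ Occ f}

/-- `f` is `p`-quotient-separated: there do not exist runners `i ≠ j` such that the
first space on runner `i` is earlier than the last bead on runner `j` and the first
space on runner `j` is earlier than the last bead on runner `i`. -/
def QSep (p : ℕ) (f : ℕ → ℕ) : Prop :=
  ¬ ∃ i j : ZMod p, i ≠ j ∧ firstSpace p f i < lastBead p f j ∧
      firstSpace p f j < lastBead p f i

/-- The position of the `(k+1)`-th lowest (i.e. latest) bead on runner `i`. -/
noncomputable def nthBead (p : ℕ) (f : ℕ → ℕ) (i : ZMod p) : ℕ → ℤ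
  | 0 => sSup {x : ℤ | x ∈ Occ f ∧ (x : ZMod p) = i}
  | k + 1 => sSup {x : ℤ | x ∈ Occ f ∧ (x : ZMod p) = i ∧ x < nthBead p f i k}

/-- The `p`-quotient component `λ^{(i)}`, as a parts function: its `(k+1)`-th part is
the number of vacant positions on runner `i` earlier than the `(k+1)`-th lowest bead
on runner `i`. -/
noncomputable def quotFn (p : ℕ) (f : ℕ → ℕ) (i : ZMod p) : ℕ → ℕ :=
  fun k => Set.ncard {x : ℤ | x ∉ Occ f ∧ (x : ZMod p) = i ∧ x < nthBead p f i k}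

open Set

noncomputable def charge (S : Set ℤ) (b : ℤ) : ℤ := b + (S ∩ Ici b).ncard - (Sᶜ ∩ Iio b).ncard

namespace Charge

variable {S : Set ℤ}

lemma finite_inter_Ici (hhi : BddAbove S) (b : ℤ) : (S ∩ Ici b).Finite := by
  obtain ⟨M, hM⟩ := hhi
  exact (finite_Icc b M).subset fun x hx => ⟨hx.2, hM hx.1⟩

lemma finite_compl_inter_Iio (hlo : ∃ a, Iic a ⊆ S) (b : ℤ) : (Sᶜ ∩ Iio b).Finite := by
  obtain ⟨a, ha⟩ := hlo
  exact (finite_Icc a b).subset fun x hx =>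
    ⟨le_of_lt (not_le.1 fun h => hx.1 (ha h)), le_of_lt hx.2⟩

lemma isLeast_sInf_compl (hlo : ∃ a, Iic a ⊆ S) (hhi : BddAbove S) :
    IsLeast Sᶜ (sInf Sᶜ) := by
  obtain ⟨a, ha⟩ := hlo
  obtain ⟨M, hM⟩ := hhi
  have hbdd : BddBelow Sᶜ := ⟨a, fun x hx => le_of_lt (not_le.1 fun h => hx (ha h))⟩
  have hne : Sᶜ.Nonempty := ⟨M + 1, fun h => by linarith [hM h]⟩
  exact ⟨Int.csInf_mem hne hbdd, fun _ hx => csInf_le hbdd hx⟩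

lemma isGreatest_sSup (hlo : ∃ a, Iic a ⊆ S) (hhi : BddAbove S) : IsGreatest S (sSup S) := by
  obtain ⟨a, ha⟩ := hlo
  exact ⟨Int.csSup_mem ⟨a, ha (mem_Iic.2 le_rfl)⟩ hhi, fun _ hx => le_csSup hhi hx⟩

lemma charge_add_one (hlo : ∃ a, Iic a ⊆ S) (hhi : BddAbove S) (b : ℤ) :
    charge S (b + 1) = charge S b := by
  have hIci : Ici b = insert b (Ici (b + 1)) := by ext; simp only [mem_Ici, mem_insert_iff]; omega
  have hIio : Iio (b + 1) = insert b (Iio b) := by ext; simp only [mem_Iio, mem_insert_iff]; omega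
  unfold charge
  by_cases hb : b ∈ S
  · have h1 : S ∩ Ici b = insert b (S ∩ Ici (b + 1)) := by
      rw [hIci, inter_insert_of_mem hb]
    have h2 : Sᶜ ∩ Iio (b + 1) = Sᶜ ∩ Iio b := by
      rw [hIio, inter_insert_of_notMem (not_not.2 hb)]
    rw [h1, h2, ncard_insert_of_notMem (fun h => by simpa using h.2)
      (finite_inter_Ici hhi _)]
    push_cast; ring
  · have h1 : S ∩ Ici b = S ∩ Ici (b + 1) := by
      rw [hIci, inter_insert_of_notMem hb]
    have h2 : Sᶜ ∩ Iio (b + 1) = insert b (Sᶜ ∩ Iio b) := by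
      rw [hIio, inter_insert_of_mem hb]
    rw [h1, h2, ncard_insert_of_notMem (fun h => by simpa using h.2)
      (finite_compl_inter_Iio hlo _)]
    push_cast; ring

lemma charge_eq_charge_zero (hlo : ∃ a, Iic a ⊆ S) (hhi : BddAbove S) (b : ℤ) :
    charge S b = charge S 0 := by
  induction b using Int.induction_on with
  | zero => rfl
  | succ n ih => rw [charge_add_one hlo hhi, ih]
  | pred n ih => rw [← ih, ← charge_add_one hlo hhi (-(n : ℤ) - 1), sub_add_cancel]

lemma charge_sInf_compl (hlo : ∃ a, Iic a ⊆ S) (hhi : BddAbove S) :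
    charge S (sInf Sᶜ) = sInf Sᶜ + (S ∩ Ioi (sInf Sᶜ)).ncard := by
  obtain ⟨hm, hmin⟩ := isLeast_sInf_compl hlo hhi
  have h1 : S ∩ Ici (sInf Sᶜ) = S ∩ Ioi (sInf Sᶜ) := by
    ext x
    simp only [mem_inter_iff, mem_Ici, mem_Ioi, and_congr_right_iff]
    exact fun hx => ⟨fun h => lt_of_le_of_ne h fun he => hm (he ▸ hx), le_of_lt⟩
  have h2 : Sᶜ ∩ Iio (sInf Sᶜ) = ∅ :=
    eq_empty_of_forall_notMem fun x hx => not_le.2 hx.2 (hmin hx.1)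
  rw [charge, h1, h2, ncard_empty, Nat.cast_zero, sub_zero]

lemma sInf_compl_le_charge (hlo : ∃ a, Iic a ⊆ S) (hhi : BddAbove S) (b : ℤ) :
    sInf Sᶜ ≤ charge S b := by
  rw [charge_eq_charge_zero hlo hhi, ← charge_eq_charge_zero hlo hhi (sInf Sᶜ),
    charge_sInf_compl hlo hhi]
  omega

lemma sInf_compl_lt_charge (hlo : ∃ a, Iic a ⊆ S) (hhi : BddAbove S) (b : ℤ) {t : ℤ}
    (ht : t ∈ S) (hlt : sInf Sᶜ < t) : sInf Sᶜ < charge S b := by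
  rw [charge_eq_charge_zero hlo hhi, ← charge_eq_charge_zero hlo hhi (sInf Sᶜ),
    charge_sInf_compl hlo hhi]
  have : 0 < (S ∩ Ioi (sInf Sᶜ)).ncard :=
    (ncard_pos ((finite_inter_Ici hhi _).subset fun _ hx =>
      ⟨hx.1, mem_Ici.2 (mem_Ioi.1 hx.2).le⟩)).2 ⟨t, ht, hlt⟩
  omega

lemma charge_le_max (hlo : ∃ a, Iic a ⊆ S) (hhi : BddAbove S) (b : ℤ) :
    charge S b ≤ max (sInf Sᶜ) (sSup S) := by
  rw [charge_eq_charge_zero hlo hhi, ← charge_eq_charge_zero hlo hhi (sInf Sᶜ),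
    charge_sInf_compl hlo hhi]
  set m := sInf Sᶜ
  rcases (S ∩ Ioi m).eq_empty_or_nonempty with he | ⟨t, ht⟩
  · simp [he]
  · have hsub : S ∩ Ioi m ⊆ Ioc m (sSup S) :=
      fun x hx => ⟨hx.2, (isGreatest_sSup hlo hhi).2 hx.1⟩
    have hcard := ncard_le_ncard hsub (finite_Ioc _ _)
    rw [← Finset.coe_Ioc, ncard_coe_finset, Int.card_Ioc] at hcard
    have : m < sSup S := lt_of_lt_of_le ht.2 ((isGreatest_sSup hlo hhi).2 ht.1)
    omega

end Charge

def runnerPos (p : ℕ) (c : ZMod p) (t : ℤ) : ℤ := c.val + p * t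

namespace Abacus

variable {p : ℕ} {f : ℕ → ℕ} {i : ZMod p}

lemma lt_of_mem_occ (hf : IsPartition f) {x : ℤ} (hx : x ∈ Occ f) : x < f 0 := by
  obtain ⟨j, rfl⟩ := hx
  have := hf.1 0 j (Nat.zero_le j)
  omega

lemma exists_Iic_subset_occ (hf : IsPartition f) : ∃ a : ℤ, Iic a ⊆ Occ f := by
  obtain ⟨N, hN⟩ := hf.2
  refine ⟨-(N : ℤ) - 1, fun x (hx : x ≤ _) => ⟨(-x - 1).toNat, ?_⟩⟩
  rw [hN _ (by omega)]
  omega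

lemma exists_addable_of_notMem_of_sub_one_mem (hf : IsPartition f) {x : ℤ} (hx : x ∉ Occ f)
    (hx1 : x - 1 ∈ Occ f) : ∃ r c, Addable f r c ∧ res p r c = x := by
  obtain ⟨r, hr⟩ := hx1
  refine ⟨r, f r, ⟨rfl, ?_⟩, ?_⟩
  · rcases Nat.eq_zero_or_pos r with h | h
    · exact Or.inl h
    refine Or.inr (lt_of_le_of_ne (hf.1 _ _ (Nat.sub_le r 1)) fun heq => hx ⟨r - 1, ?_⟩)
    rw [← heq]
    omega
  · rw [show x = (f r : ℤ) - r by omega, res]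
    push_cast
    ring

lemma exists_mem_occ_of_removable (hf : IsPartition f) {r c : ℕ} (h : Removable f r c) :
    ∃ x, x ∈ Occ f ∧ x - 1 ∉ Occ f ∧ (x : ZMod p) = res p r c := by
  obtain ⟨hc, hlt⟩ := h
  refine ⟨(f r : ℤ) - (r + 1), ⟨r, rfl⟩, ?_, ?_⟩
  · rintro ⟨j, hj⟩
    rcases le_or_gt j r with hle | hgt
    · have := hf.1 j r hle
      omega
    · have := hf.1 (r + 1) j hgt
      omega
  · rw [← hc, res]
    push_cast
    ring

lemma intCast_sub_one {x : ℤ} (hx : (x : ZMod p) = i) : ((x - 1 : ℤ) : ZMod p) = i - 1 := by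
  rw [Int.cast_sub, hx, Int.cast_one]

variable [NeZero p]

lemma strictMono_runnerPos (c : ZMod p) : StrictMono (runnerPos p c) := fun s t h => by
  have : (0 : ℤ) < p := by exact_mod_cast NeZero.pos p
  unfold runnerPos
  nlinarith

lemma range_runnerPos (c : ZMod p) : range (runnerPos p c) = {x : ℤ | (x : ZMod p) = c} := by
  have hc : (((c.val : ℤ)) : ZMod p) = c := by simp
  ext x
  simp only [mem_range, runnerPos]
  constructor
  · rintro ⟨t, rfl⟩
    simp
  · intro hx
    obtain ⟨t, ht⟩ := (ZMod.intCast_eq_intCast_iff_dvd_sub (c.val : ℤ) x p).1 (hc.trans hx.symm)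
    exact ⟨t, by omega⟩

lemma setOf_intCast_eq_and (c : ZMod p) (P : ℤ → Prop) :
    {x : ℤ | (x : ZMod p) = c ∧ P x} = runnerPos p c '' (runnerPos p c ⁻¹' {x | P x}) := by
  rw [image_preimage_eq_inter_range, range_runnerPos, inter_comm]
  rfl

lemma ncard_setOf_intCast_eq_and (c : ZMod p) (P : ℤ → Prop) :
    {x : ℤ | (x : ZMod p) = c ∧ P x}.ncard = (runnerPos p c ⁻¹' {x | P x}).ncard := by
  rw [setOf_intCast_eq_and, ncard_image_of_injective _ (strictMono_runnerPos c).injective]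

lemma exists_Iic_subset_runnerPos_preimage (hf : IsPartition f) (c : ZMod p) :
    ∃ a : ℤ, Iic a ⊆ runnerPos p c ⁻¹' Occ f := by
  obtain ⟨a, ha⟩ := exists_Iic_subset_occ hf
  refine ⟨-|a| - c.val, fun t ht => ha ?_⟩
  have hp : (1 : ℤ) ≤ p := by exact_mod_cast NeZero.one_le
  simp only [mem_Iic, runnerPos] at ht ⊢
  have ht0 : t ≤ 0 := by linarith [abs_nonneg a, Int.natCast_nonneg c.val]
  linarith [neg_abs_le a, mul_le_mul_of_nonpos_right hp ht0]

lemma bddAbove_runnerPos_preimage (hf : IsPartition f) (c : ZMod p) :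
    BddAbove (runnerPos p c ⁻¹' Occ f) := by
  refine ⟨f 0, fun t ht => ?_⟩
  have hp : (1 : ℤ) ≤ p := by exact_mod_cast NeZero.one_le
  have := lt_of_mem_occ hf ht
  simp only [runnerPos] at this
  nlinarith

lemma isLeast_runnerPos_sInf (hf : IsPartition f) (c : ZMod p) :
    IsLeast {x : ℤ | (x : ZMod p) = c ∧ x ∉ Occ f}
      (runnerPos p c (sInf (runnerPos p c ⁻¹' Occ f)ᶜ)) := by
  rw [setOf_intCast_eq_and]
  exact (strictMono_runnerPos c).monotone.map_isLeast
    (Charge.isLeast_sInf_compl (exists_Iic_subset_runnerPos_preimage hf c)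
      (bddAbove_runnerPos_preimage hf c))

lemma isGreatest_runnerPos_sSup (hf : IsPartition f) (c : ZMod p) :
    IsGreatest {x : ℤ | (x : ZMod p) = c ∧ x ∈ Occ f}
      (runnerPos p c (sSup (runnerPos p c ⁻¹' Occ f))) := by
  rw [setOf_intCast_eq_and]
  exact (strictMono_runnerPos c).monotone.map_isGreatest
    (Charge.isGreatest_sSup (exists_Iic_subset_runnerPos_preimage hf c)
      (bddAbove_runnerPos_preimage hf c))

lemma firstSpace_eq (hf : IsPartition f) (c : ZMod p) :
    firstSpace p f c = runnerPos p c (sInf (runnerPos p c ⁻¹' Occ f)ᶜ) :=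
  (isLeast_runnerPos_sInf hf c).csInf_eq

lemma lastBead_eq (hf : IsPartition f) (c : ZMod p) :
    lastBead p f c = runnerPos p c (sSup (runnerPos p c ⁻¹' Occ f)) :=
  (isGreatest_runnerPos_sSup hf c).csSup_eq

lemma isLeast_firstSpace (hf : IsPartition f) (c : ZMod p) :
    IsLeast {x : ℤ | (x : ZMod p) = c ∧ x ∉ Occ f} (firstSpace p f c) :=
  firstSpace_eq hf c ▸ isLeast_runnerPos_sInf hf c

lemma isGreatest_lastBead (hf : IsPartition f) (c : ZMod p) :
    IsGreatest {x : ℤ | (x : ZMod p) = c ∧ x ∈ Occ f} (lastBead p f c) :=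
  lastBead_eq hf c ▸ isGreatest_runnerPos_sSup hf c

lemma mem_occ_of_lt_firstSpace (hf : IsPartition f) {c : ZMod p} {x : ℤ}
    (hx : (x : ZMod p) = c) (hlt : x < firstSpace p f c) : x ∈ Occ f :=
  not_not.1 fun hvac => not_le.2 hlt ((isLeast_firstSpace hf c).2 ⟨hx, hvac⟩)

lemma firstSpace_le_lastBead_add (hf : IsPartition f) (c : ZMod p) :
    firstSpace p f c ≤ lastBead p f c + p := by
  obtain ⟨⟨hL, -⟩, hmax⟩ := isGreatest_lastBead hf c
  refine (isLeast_firstSpace hf c).2 ⟨by simp [hL], fun hmem => ?_⟩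
  have := hmax ⟨by simp [hL], hmem⟩
  have : (0 : ℤ) < p := by exact_mod_cast NeZero.pos p
  omega

lemma qpos_eq (c : ZMod p) :
    qpos p f c = runnerPos p c (charge (runnerPos p c ⁻¹' Occ f) 0) := by
  have hp : (0 : ℤ) < p := by exact_mod_cast NeZero.pos p
  have hbeads : {x : ℤ | x ∈ Occ f ∧ (x : ZMod p) = c ∧ (c.val : ℤ) ≤ x}.ncard
      = (runnerPos p c ⁻¹' Occ f ∩ Ici 0).ncard := by
    simp_rw [and_left_comm (a := _ ∈ Occ f)]
    rw [ncard_setOf_intCast_eq_and]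
    congr 1
    ext t
    simp [runnerPos, mul_nonneg_iff_of_pos_left hp]
  have hspaces : {x : ℤ | x ∉ Occ f ∧ (x : ZMod p) = c ∧ x < (c.val : ℤ)}.ncard
      = ((runnerPos p c ⁻¹' Occ f)ᶜ ∩ Iio 0).ncard := by
    simp_rw [and_left_comm (a := _ ∉ Occ f)]
    rw [ncard_setOf_intCast_eq_and]
    congr 1
    ext t
    have hneg : (p : ℤ) * t < 0 ↔ t < 0 := by
      simpa only [not_le] using (mul_nonneg_iff_of_pos_left hp).not
    simp [runnerPos, hneg]
  rw [qpos, hbeads, hspaces, charge, runnerPos, zero_add]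

lemma firstSpace_le_qpos (hf : IsPartition f) (c : ZMod p) : firstSpace p f c ≤ qpos p f c := by
  rw [firstSpace_eq hf, qpos_eq]
  exact (strictMono_runnerPos c).monotone <| Charge.sInf_compl_le_charge
    (exists_Iic_subset_runnerPos_preimage hf c) (bddAbove_runnerPos_preimage hf c) 0

lemma qpos_le_max (hf : IsPartition f) (c : ZMod p) :
    qpos p f c ≤ max (firstSpace p f c) (lastBead p f c) := by
  rw [firstSpace_eq hf, lastBead_eq hf, qpos_eq, ← (strictMono_runnerPos c).monotone.map_max]
  exact (strictMono_runnerPos c).monotone <| Charge.charge_le_max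
    (exists_Iic_subset_runnerPos_preimage hf c) (bddAbove_runnerPos_preimage hf c) 0

lemma firstSpace_add_le_qpos (hf : IsPartition f) {c : ZMod p} {x : ℤ}
    (hx : (x : ZMod p) = c) (hmem : x ∈ Occ f) (hlt : firstSpace p f c < x) :
    firstSpace p f c + p ≤ qpos p f c := by
  obtain ⟨t, rfl⟩ : x ∈ range (runnerPos p c) := by rwa [range_runnerPos]
  rw [firstSpace_eq hf] at hlt ⊢
  rw [qpos_eq]
  have := Charge.sInf_compl_lt_charge (exists_Iic_subset_runnerPos_preimage hf c)
    (bddAbove_runnerPos_preimage hf c) 0 hmem ((strictMono_runnerPos c).lt_iff_lt.1 hlt)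
  have hp : (0 : ℤ) ≤ p := Int.natCast_nonneg p
  simp only [runnerPos]
  nlinarith

lemma addable_and_not_removable_of_lastBead_sub_one_le (hf : IsPartition f)
    (hq : qpos p f i < qpos p f (i - 1)) (hL : lastBead p f (i - 1) ≤ firstSpace p f i) :
    (∃ r c, Addable f r c ∧ res p r c = i) ∧ ∀ r c, Removable f r c → res p r c ≠ i := by
  obtain ⟨⟨hFi, hFi_vac⟩, -⟩ := isLeast_firstSpace hf i
  have hqi := firstSpace_le_qpos hf i
  have hqj := qpos_le_max hf (i - 1)
  have hF : firstSpace p f i < firstSpace p f (i - 1) := by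
    by_contra! h
    have := max_le h hL
    omega
  refine ⟨?_, fun r c hrem hi => ?_⟩
  · have := mem_occ_of_lt_firstSpace hf (intCast_sub_one hFi) (by omega)
    obtain ⟨r, c, hadd, hres⟩ := exists_addable_of_notMem_of_sub_one_mem (p := p) hf hFi_vac this
    exact ⟨r, c, hadd, hres.trans hFi⟩
  · obtain ⟨x, hx, hx1, hres⟩ := exists_mem_occ_of_removable (p := p) hf hrem
    rw [hi] at hres
    -- the gap at `x - 1` lies after `F_{i-1} > F_i`, so runner `i` has a bead after its first space
    have h1 := (isLeast_firstSpace hf (i - 1)).2 ⟨intCast_sub_one hres, hx1⟩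
    have h2 := firstSpace_add_le_qpos hf hres hx (by omega)
    have h3 := firstSpace_le_lastBead_add hf (i - 1)
    have h4 : max (firstSpace p f (i - 1)) (lastBead p f (i - 1)) ≤ firstSpace p f i + p :=
      max_le (by omega) (by omega)
    omega

lemma addable_and_not_removable_of_lastBead_le (hf : IsPartition f)
    (hq : qpos p f i < qpos p f (i - 1)) (hL : lastBead p f i ≤ firstSpace p f (i - 1)) :
    (∃ r c, Addable f r c ∧ res p r c = i) ∧ ∀ r c, Removable f r c → res p r c ≠ i := by
  obtain ⟨⟨hFi, hFi_vac⟩, -⟩ := isLeast_firstSpace hf i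
  refine ⟨?_, fun r c hrem hi => ?_⟩
  · by_cases hocc : firstSpace p f i - 1 ∈ Occ f
    · obtain ⟨r, c, hadd, hres⟩ :=
        exists_addable_of_notMem_of_sub_one_mem (p := p) hf hFi_vac hocc
      exact ⟨r, c, hadd, hres.trans hFi⟩
    -- otherwise `F_{i-1} < F_i ≤ q_i < q_{i-1}`, which forces the last bead of runner `i - 1`
    -- past `F_{i-1} ≥ L_i`; the position after it is then a space on runner `i`
    have h1 := (isLeast_firstSpace hf (i - 1)).2 ⟨intCast_sub_one hFi, hocc⟩
    have h2 := firstSpace_le_qpos hf i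
    have h3 := qpos_le_max hf (i - 1)
    have hLj : firstSpace p f (i - 1) < lastBead p f (i - 1) := by
      by_contra! h
      rw [max_eq_left h] at h3
      omega
    obtain ⟨⟨hLc, hLmem⟩, -⟩ := isGreatest_lastBead hf (i - 1)
    have hcast : ((lastBead p f (i - 1) + 1 : ℤ) : ZMod p) = i := by
      rw [Int.cast_add, hLc, Int.cast_one, sub_add_cancel]
    have hvac : lastBead p f (i - 1) + 1 ∉ Occ f := fun hmem => by
      have := (isGreatest_lastBead hf i).2 ⟨hcast, hmem⟩
      omega
    obtain ⟨r, c, hadd, hres⟩ := exists_addable_of_notMem_of_sub_one_mem (p := p) hf hvac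
      (by rwa [add_sub_cancel_right])
    exact ⟨r, c, hadd, hres.trans hcast⟩
  · obtain ⟨x, hx, hx1, hres⟩ := exists_mem_occ_of_removable (p := p) hf hrem
    rw [hi] at hres
    have := (isGreatest_lastBead hf i).2 ⟨hres, hx⟩
    exact hx1 (mem_occ_of_lt_firstSpace hf (intCast_sub_one hres) (by omega))

end Abacus

lemma QSep.lastBead_le_or {p : ℕ} {f : ℕ → ℕ} (h : QSep p f) {i j : ZMod p} (hij : i ≠ j) :
    lastBead p f j ≤ firstSpace p f i ∨ lastBead p f i ≤ firstSpace p f j := by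
  by_contra! h'
  exact h ⟨i, j, hij, h'.1, h'.2⟩

/-- If `λ` is `p`-quotient-separated and `q_{i−1}(λ) > q_i(λ)`, then `λ` has at least
one addable `i`-node and no removable `i`-nodes. -/
theorem stmt13 (p : ℕ) (hp : 2 ≤ p) (f : ℕ → ℕ) (hf : IsPartition f)
    (hqs : QSep p f) (i : ZMod p) (hq : qpos p f i < qpos p f (i - 1)) :
    (∃ r c, Addable f r c ∧ res p r c = i) ∧
      (∀ r c, Removable f r c → res p r c ≠ i) := by
  have : NeZero p := ⟨by omega⟩
  have hne : i ≠ i - 1 := fun h => by rw [← h] at hq; exact lt_irrefl _ hq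
  rcases hqs.lastBead_le_or hne with hL | hL
  · exact Abacus.addable_and_not_removable_of_lastBead_sub_one_le hf hq hL
  · exact Abacus.addable_and_not_removable_of_lastBead_le hf hq hL
end

section
/- Let λ be a p-quotient-separated partition and i ∈ ℤ/pℤ with q_{i−1}(λ) > q_i(λ), and let μ = λ^{△i} be the partition obtained by adding all addable i-nodes to λ. Then the abacus display of μ is obtained from that of λ by swapping runners i−1 and i (position kp+i is occupied in μ iff kp+i−1 is occupied in λ, and vice versa); consequently λ^{(j)}(μ-quotient) satisfies μ^{(i)} = λ^{(i−1)}, μ^{(i−1)} = λ^{(i)}, μ^{(j)} = λ^{(j)} otherwise, and q_i(μ) = q_{i−1}(λ)+1, q_{i−1}(μ) = q_i(λ)−1, q_j(μ) = q_j(λ) otherwise. -/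
/-- Row `r` of `f` contains an addable node of residue `i`. -/
def AddRes (p : ℕ) (f : ℕ → ℕ) (i : ZMod p) (r : ℕ) : Prop :=
  ∃ c, Addable f r c ∧ res p r c = i

open Classical in
/-- `λ^{△i}`: the partition obtained from `λ` by adding all its addable `i`-nodes. -/
noncomputable def addAllF (p : ℕ) (i : ZMod p) (f : ℕ → ℕ) : ℕ → ℕ :=
  fun r => f r + (if AddRes p f i r then 1 else 0)

/-!
On runner `j`, the charge `t + p (#beads ≥ t - #spaces < t)` takes the same value `q_j` at
every threshold `t` on that runner. Evaluating it at the first space `a_j` and just past the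
last bead `b_j` gives `a_j ≤ q_j ≤ max a_j b_j`, with `a_j + p ≤ q_j` as soon as a bead lies
past `a_j`.

If `λ` had a removable `i`-node, i.e. a bead `x` on runner `i` with `x - 1` vacant, then
`a_{i-1} < b_i`, so quotient separation forces `b_{i-1} ≤ a_i`. If `a_{i-1} < a_i` this gives
`q_{i-1} ≤ max a_{i-1} b_{i-1} < a_i ≤ q_i`; otherwise
`q_{i-1} ≤ a_{i-1} ≤ b_{i-1} + p ≤ a_i + p ≤ q_i`. Both contradict `q_i < q_{i-1}`.
So adding all addable `i`-nodes moves exactly the beads on runner `i - 1` with a vacant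
successor one step right, which swaps runners `i - 1` and `i`. Quotients and charges are
transported along translations of a runner, which gives the rest.
-/

open Set

section Abacus

def beadPos (f : ℕ → ℕ) (j : ℕ) : ℤ := (f j : ℤ) - ((j : ℤ) + 1)

theorem occ_eq_range (f : ℕ → ℕ) : Occ f = range (beadPos f) := by
  ext x
  exact exists_congr fun j => eq_comm

variable {f : ℕ → ℕ}

theorem IsPartition.beadPos_strictAnti (hf : IsPartition f) : StrictAnti (beadPos f) :=
  strictAnti_nat_of_succ_lt fun n => by
    have := hf.1 n (n + 1) n.le_succ
    simp only [beadPos]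
    push_cast
    omega

theorem IsPartition.le_of_mem_occ (hf : IsPartition f) {x : ℤ} (hx : x ∈ Occ f) :
    x ≤ (f 0 : ℤ) - 1 := by
  obtain ⟨j, rfl⟩ := hx
  have := hf.1 0 j j.zero_le
  omega

theorem IsPartition.exists_forall_le_mem_occ (hf : IsPartition f) :
    ∃ N : ℤ, ∀ x ≤ N, x ∈ Occ f := by
  obtain ⟨N, hN⟩ := hf.2
  refine ⟨-(N : ℤ) - 1, fun x hx => ⟨(-x - 1).toNat, ?_⟩⟩
  rw [hN _ (by omega)]
  omega

theorem IsPartition.bddAbove_occ (hf : IsPartition f) : BddAbove (Occ f) :=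
  ⟨_, fun _ => hf.le_of_mem_occ⟩

theorem IsPartition.bddBelow_compl_occ (hf : IsPartition f) : BddBelow (Occ f)ᶜ := by
  obtain ⟨N, hN⟩ := hf.exists_forall_le_mem_occ
  exact ⟨N, fun x hx => not_lt.mp fun h => hx (hN x h.le)⟩

theorem IsPartition.finite_occ_inter_Ici (hf : IsPartition f) (t : ℤ) :
    (Occ f ∩ Ici t).Finite :=
  (finite_Icc t _).subset fun _ hx => ⟨hx.2, hf.le_of_mem_occ hx.1⟩

theorem IsPartition.finite_compl_occ_inter_Iio (hf : IsPartition f) (t : ℤ) :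
    ((Occ f)ᶜ ∩ Iio t).Finite := by
  obtain ⟨N, hN⟩ := hf.bddBelow_compl_occ
  exact (finite_Icc N t).subset fun _ hx => ⟨hN hx.1, le_of_lt hx.2⟩

end Abacus

section Representatives

variable {p : ℕ} [NeZero p]

theorem ZMod.exists_intCast_eq_lt (j : ZMod p) (c : ℤ) : ∃ x : ℤ, (x : ZMod p) = j ∧ x < c := by
  refine ⟨(j.cast : ℤ) - p * |c - j.cast| - p, by simp, ?_⟩
  have hp : (1 : ℤ) ≤ p := by exact_mod_cast NeZero.one_le
  nlinarith [neg_abs_le (c - j.cast), le_abs_self (c - j.cast),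
    mul_nonneg (sub_nonneg.mpr hp) (abs_nonneg (c - j.cast))]

theorem ZMod.exists_intCast_eq_gt (j : ZMod p) (c : ℤ) : ∃ x : ℤ, (x : ZMod p) = j ∧ c < x := by
  refine ⟨(j.cast : ℤ) + p * |c - j.cast| + p, by simp, ?_⟩
  have hp : (1 : ℤ) ≤ p := by exact_mod_cast NeZero.one_le
  nlinarith [neg_abs_le (c - j.cast), le_abs_self (c - j.cast),
    mul_nonneg (sub_nonneg.mpr hp) (abs_nonneg (c - j.cast))]

end Representatives

theorem eq_of_intCast_eq_of_le_of_lt_add {p : ℕ} {x t : ℤ} (h : (x : ZMod p) = t) (h₁ : t ≤ x)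
    (h₂ : x < t + p) : x = t := by
  have := Int.eq_zero_of_abs_lt_dvd ((ZMod.intCast_eq_intCast_iff_dvd_sub t x p).mp h.symm)
    (abs_lt.mpr ⟨by omega, by omega⟩)
  omega

section FirstSpaceLastBead

variable {p : ℕ} {f : ℕ → ℕ}

theorem IsPartition.exists_mem_occ_lt [NeZero p] (hf : IsPartition f) (j : ZMod p) (c : ℤ) :
    ∃ x ∈ Occ f, (x : ZMod p) = j ∧ x < c := by
  obtain ⟨N, hN⟩ := hf.exists_forall_le_mem_occ
  obtain ⟨x, hxj, hx⟩ := ZMod.exists_intCast_eq_lt j (min N c)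
  exact ⟨x, hN x (by omega), hxj, by omega⟩

theorem IsPartition.exists_not_mem_occ [NeZero p] (hf : IsPartition f) (j : ZMod p) :
    ∃ x ∉ Occ f, (x : ZMod p) = j := by
  obtain ⟨x, hxj, hx⟩ := ZMod.exists_intCast_eq_gt j ((f 0 : ℤ) - 1)
  exact ⟨x, fun h => (hf.le_of_mem_occ h).not_gt hx, hxj⟩

theorem IsPartition.firstSpace_mem [NeZero p] (hf : IsPartition f) (j : ZMod p) :
    (firstSpace p f j : ZMod p) = j ∧ firstSpace p f j ∉ Occ f := by
  obtain ⟨x, hx, hxj⟩ := hf.exists_not_mem_occ j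
  exact Int.csInf_mem (s := {x : ℤ | (x : ZMod p) = j ∧ x ∉ Occ f}) ⟨x, hxj, hx⟩
    (hf.bddBelow_compl_occ.mono fun _ hy => hy.2)

theorem IsPartition.firstSpace_le (hf : IsPartition f) {j : ZMod p} {x : ℤ}
    (hxj : (x : ZMod p) = j) (hx : x ∉ Occ f) : firstSpace p f j ≤ x :=
  csInf_le (hf.bddBelow_compl_occ.mono fun _ hy => hy.2) ⟨hxj, hx⟩

theorem IsPartition.mem_occ_of_lt_firstSpace (hf : IsPartition f) {j : ZMod p} {x : ℤ}
    (hxj : (x : ZMod p) = j) (hx : x < firstSpace p f j) : x ∈ Occ f := by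
  by_contra h
  exact (hf.firstSpace_le hxj h).not_gt hx

theorem IsPartition.lastBead_mem [NeZero p] (hf : IsPartition f) (j : ZMod p) :
    (lastBead p f j : ZMod p) = j ∧ lastBead p f j ∈ Occ f := by
  obtain ⟨x, hx, hxj, -⟩ := hf.exists_mem_occ_lt j 0
  exact Int.csSup_mem (s := {x : ℤ | (x : ZMod p) = j ∧ x ∈ Occ f}) ⟨x, hxj, hx⟩
    (hf.bddAbove_occ.mono fun _ hy => hy.2)

theorem IsPartition.le_lastBead (hf : IsPartition f) {j : ZMod p} {x : ℤ}
    (hxj : (x : ZMod p) = j) (hx : x ∈ Occ f) : x ≤ lastBead p f j :=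
  le_csSup (hf.bddAbove_occ.mono fun _ hy => hy.2) ⟨hxj, hx⟩

end FirstSpaceLastBead

section Charge

variable {p : ℕ} (S : Set ℤ) (j : ZMod p)

/-- At `t = j.val` this is `qpos`. Moving `t` by `p` along runner `j` trades a bead counted
above `t` for a space counted below it, so the value is the same for every `t` on runner `j`. -/
noncomputable def runnerCharge (t : ℤ) : ℤ :=
  t + p * ((ncard {x | x ∈ S ∧ (x : ZMod p) = j ∧ t ≤ x} : ℤ) -
    (ncard {x | x ∉ S ∧ (x : ZMod p) = j ∧ x < t} : ℤ))

theorem qpos_eq_runnerCharge (f : ℕ → ℕ) : qpos p f j = runnerCharge (Occ f) j j.val := rfl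

variable {S j}

theorem runnerCharge_add_self [NeZero p] {t : ℤ} (hS : (S ∩ Ici (t + p)).Finite)
    (hSc : (Sᶜ ∩ Iio t).Finite) (ht : (t : ZMod p) = j) :
    runnerCharge S j (t + p) = runnerCharge S j t := by
  have hp : (0 : ℤ) < p := by exact_mod_cast NeZero.pos p
  have hgap : ∀ x : ℤ, (x : ZMod p) = j → t ≤ x → x < t + p → x = t := fun x hx =>
    eq_of_intCast_eq_of_le_of_lt_add (hx.trans ht.symm)
  set A := {x | x ∈ S ∧ (x : ZMod p) = j ∧ t + p ≤ x}
  set B := {x | x ∉ S ∧ (x : ZMod p) = j ∧ x < t}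
  have hA : A.Finite := hS.subset fun x hx => ⟨hx.1, hx.2.2⟩
  have hB : B.Finite := hSc.subset fun x hx => ⟨hx.1, hx.2.2⟩
  have htA : t ∉ A := fun h => by linarith [h.2.2]
  have htB : t ∉ B := fun h => lt_irrefl t h.2.2
  by_cases hts : t ∈ S
  · have hbeads : {x | x ∈ S ∧ (x : ZMod p) = j ∧ t ≤ x} = insert t A := by
      ext x
      simp only [A, mem_ofPred_eq, mem_insert_iff]
      have := hgap x
      grind
    have hspaces : {x | x ∉ S ∧ (x : ZMod p) = j ∧ x < t + p} = B := by
      ext x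
      simp only [B, mem_ofPred_eq]
      have := hgap x
      grind
    simp only [runnerCharge, hbeads, hspaces, ncard_insert_of_notMem htA hA]
    push_cast
    ring
  · have hbeads : {x | x ∈ S ∧ (x : ZMod p) = j ∧ t ≤ x} = A := by
      ext x
      simp only [A, mem_ofPred_eq]
      have := hgap x
      grind
    have hspaces : {x | x ∉ S ∧ (x : ZMod p) = j ∧ x < t + p} = insert t B := by
      ext x
      simp only [B, mem_ofPred_eq, mem_insert_iff]
      have := hgap x
      grind
    simp only [runnerCharge, hbeads, hspaces, ncard_insert_of_notMem htB hB]
    push_cast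
    ring

end Charge

section Qpos

variable {p : ℕ} [NeZero p] {f : ℕ → ℕ} {j : ZMod p}

theorem IsPartition.runnerCharge_add_mul (hf : IsPartition f) {t : ℤ} (ht : (t : ZMod p) = j)
    (d : ℤ) : runnerCharge (Occ f) j (t + p * d) = runnerCharge (Occ f) j t := by
  have step : ∀ s : ℤ,
      runnerCharge (Occ f) j (t + p * s + p) = runnerCharge (Occ f) j (t + p * s) := fun s =>
    runnerCharge_add_self (hf.finite_occ_inter_Ici _) (hf.finite_compl_occ_inter_Iio _)
      (by simp [ht])
  induction d using Int.induction_on with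
  | zero => simp
  | succ k ih => rw [mul_add_one, ← add_assoc, step, ih]
  | pred k ih => rw [← ih, ← step]; ring_nf

theorem IsPartition.runnerCharge_eq_qpos (hf : IsPartition f) {t : ℤ} (ht : (t : ZMod p) = j) :
    runnerCharge (Occ f) j t = qpos p f j := by
  obtain ⟨d, hd⟩ := (ZMod.intCast_eq_intCast_iff_dvd_sub (j.val : ℤ) t p).mp (by simp [ht])
  rw [qpos_eq_runnerCharge, ← hf.runnerCharge_add_mul (t := j.val) (by simp) d, ← hd,
    add_sub_cancel]

theorem IsPartition.qpos_eq_firstSpace_add (hf : IsPartition f) (j : ZMod p) :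
    qpos p f j = firstSpace p f j +
      p * (ncard {x | x ∈ Occ f ∧ (x : ZMod p) = j ∧ firstSpace p f j ≤ x} : ℤ) := by
  have hno : {x | x ∉ Occ f ∧ (x : ZMod p) = j ∧ x < firstSpace p f j} = ∅ :=
    eq_empty_of_forall_notMem fun x ⟨hx, hxj, hlt⟩ => hx (hf.mem_occ_of_lt_firstSpace hxj hlt)
  rw [← hf.runnerCharge_eq_qpos (hf.firstSpace_mem j).1, runnerCharge, hno, ncard_empty]
  ring

theorem IsPartition.qpos_eq_lastBead_add_sub (hf : IsPartition f) (j : ZMod p) :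
    qpos p f j = lastBead p f j + p -
      p * (ncard {x | x ∉ Occ f ∧ (x : ZMod p) = j ∧ x < lastBead p f j + p} : ℤ) := by
  have hno : {x | x ∈ Occ f ∧ (x : ZMod p) = j ∧ lastBead p f j + p ≤ x} = ∅ :=
    eq_empty_of_forall_notMem fun x ⟨hx, hxj, hle⟩ => by
      have := hf.le_lastBead hxj hx
      have : (0 : ℤ) < p := by exact_mod_cast NeZero.pos p
      omega
  rw [← hf.runnerCharge_eq_qpos (t := lastBead p f j + p) (by simp [(hf.lastBead_mem j).1]),
    runnerCharge, hno, ncard_empty]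
  ring

theorem IsPartition.firstSpace_le_qpos (hf : IsPartition f) (j : ZMod p) :
    firstSpace p f j ≤ qpos p f j := by
  rw [hf.qpos_eq_firstSpace_add]
  exact le_add_of_nonneg_right (by positivity)

theorem IsPartition.firstSpace_add_le_qpos (hf : IsPartition f) {x : ℤ} (hx : x ∈ Occ f)
    (hxj : (x : ZMod p) = j) (hlt : firstSpace p f j < x) :
    firstSpace p f j + p ≤ qpos p f j := by
  have hpos : 1 ≤ ncard {x | x ∈ Occ f ∧ (x : ZMod p) = j ∧ firstSpace p f j ≤ x} :=
    (ncard_pos ((hf.finite_occ_inter_Ici (firstSpace p f j)).subset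
      fun _ hy => ⟨hy.1, hy.2.2⟩)).mpr ⟨x, hx, hxj, hlt.le⟩
  rw [hf.qpos_eq_firstSpace_add]
  gcongr
  exact le_mul_of_one_le_right (by positivity) (by exact_mod_cast hpos)

theorem IsPartition.qpos_le_max (hf : IsPartition f) (j : ZMod p) :
    qpos p f j ≤ max (firstSpace p f j) (lastBead p f j) := by
  set n := ncard {x | x ∉ Occ f ∧ (x : ZMod p) = j ∧ x < lastBead p f j + p}
  have hq := hf.qpos_eq_lastBead_add_sub j
  have : (0 : ℤ) ≤ p := by positivity
  by_cases hfs : firstSpace p f j < lastBead p f j + p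
  · have hn : 0 < n := (ncard_pos ((hf.finite_compl_occ_inter_Iio _).subset
      fun _ hy => ⟨hy.1, hy.2.2⟩)).mpr ⟨_, (hf.firstSpace_mem j).2, (hf.firstSpace_mem j).1, hfs⟩
    have : (1 : ℤ) ≤ n := by exact_mod_cast hn
    exact le_max_of_le_right (by nlinarith)
  · exact le_max_of_le_left (by nlinarith [Int.natCast_nonneg n])

theorem IsPartition.firstSpace_le_lastBead_add (hf : IsPartition f) (j : ZMod p) :
    firstSpace p f j ≤ lastBead p f j + p := by
  have : (0 : ℤ) < p := by exact_mod_cast NeZero.pos p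
  have hres : ((lastBead p f j + p : ℤ) : ZMod p) = j := by simp [(hf.lastBead_mem j).1]
  refine hf.firstSpace_le hres fun h => ?_
  have := hf.le_lastBead hres h
  omega

end Qpos

theorem IsPartition.sub_one_mem_occ_of_qSep {p : ℕ} [NeZero p] [Nontrivial (ZMod p)]
    {f : ℕ → ℕ} (hf : IsPartition f) {i : ZMod p} (hqs : QSep p f)
    (hq : qpos p f i < qpos p f (i - 1)) {x : ℤ} (hx : x ∈ Occ f) (hxi : (x : ZMod p) = i) :
    x - 1 ∈ Occ f := by
  by_contra hvac
  have hne : i - 1 ≠ i := pred_ne_self i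
  set a := firstSpace p f (i - 1)
  set a' := firstSpace p f i
  set b := lastBead p f (i - 1)
  have hax : a ≤ x - 1 := hf.firstSpace_le (by push_cast; rw [hxi]) hvac
  have hab' : a < lastBead p f i := by linarith [hf.le_lastBead hxi hx]
  have hba' : b ≤ a' := not_lt.mp fun h => hqs ⟨i - 1, i, hne, hab', h⟩
  have hba'_ne : b ≠ a' := fun h =>
    hne (((hf.lastBead_mem _).1.symm.trans (congrArg _ h)).trans (hf.firstSpace_mem i).1)
  have haa'_ne : a ≠ a' := fun h =>
    hne (((hf.firstSpace_mem _).1.symm.trans (congrArg _ h)).trans (hf.firstSpace_mem i).1)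
  have hq₁ := hf.qpos_le_max (i - 1)
  rcases haa'_ne.lt_or_gt with haa' | haa'
  · have := hf.firstSpace_le_qpos i
    have : max a b < a' := max_lt haa' (lt_of_le_of_ne hba' hba'_ne)
    omega
  · have := hf.firstSpace_le_lastBead_add (i - 1)
    have := hf.firstSpace_add_le_qpos hx hxi (by omega)
    have : max a b = a := max_eq_left (by omega)
    omega

section AddAll

variable {p : ℕ} (i : ZMod p) (S : Set ℤ)

open Classical in
/-- Adding an addable `i`-node to a row slides its bead one step onto a vacant position of
runner `i`. -/
noncomputable def slideBead (x : ℤ) : ℤ :=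
  if ((x + 1 : ℤ) : ZMod p) = i ∧ x + 1 ∉ S then x + 1 else x

variable {i S}

theorem mem_image_slideBead_iff {x : ℤ} :
    x ∈ slideBead i S '' S ↔
      (x - 1 ∈ S ∧ (x : ZMod p) = i ∧ x ∉ S) ∨
        (x ∈ S ∧ ¬(((x + 1 : ℤ) : ZMod p) = i ∧ x + 1 ∉ S)) := by
  constructor
  · rintro ⟨y, hy, rfl⟩
    unfold slideBead
    split_ifs with h
    · exact Or.inl ⟨by simpa using hy, h⟩
    · exact Or.inr ⟨hy, h⟩
  · rintro (⟨hx₁, hxi, hx⟩ | ⟨hx, hslide⟩)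
    · exact ⟨x - 1, hx₁, by simp [slideBead, hxi, hx]⟩
    · exact ⟨x, hx, if_neg hslide⟩

theorem mem_image_slideBead_iff_of_ne {x : ℤ} (hx : (x : ZMod p) ≠ i)
    (hx' : (x : ZMod p) ≠ i - 1) : x ∈ slideBead i S '' S ↔ x ∈ S := by
  have : (x : ZMod p) + 1 ≠ i := fun h => hx' (by rw [← h]; ring)
  rw [mem_image_slideBead_iff]
  simp [hx, this]

variable [Nontrivial (ZMod p)] (hpred : ∀ x ∈ S, (x : ZMod p) = i → x - 1 ∈ S)
include hpred

theorem mem_image_slideBead_iff_of_eq {x : ℤ} (hx : (x : ZMod p) = i) :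
    x ∈ slideBead i S '' S ↔ x - 1 ∈ S := by
  have : (x : ZMod p) + 1 ≠ i := hx ▸ succ_ne_self i
  rw [mem_image_slideBead_iff]
  by_cases hxS : x ∈ S
  · simp [hxS, this, hpred x hxS hx]
  · simp [hxS, hx]

theorem mem_image_slideBead_iff_of_eq_sub_one {x : ℤ} (hx : (x : ZMod p) = i - 1) :
    x ∈ slideBead i S '' S ↔ x + 1 ∈ S := by
  have hx₁ : (x : ZMod p) + 1 = i := by rw [hx]; ring
  have : (x : ZMod p) ≠ i := hx ▸ pred_ne_self i
  rw [mem_image_slideBead_iff]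
  by_cases hxS : x + 1 ∈ S
  · simp [hxS, hx₁, this, by simpa using hpred _ hxS (by push_cast; exact hx₁)]
  · simp [hxS, hx₁, this]

end AddAll

section AddAllF

variable {p : ℕ} {f : ℕ → ℕ}

theorem IsPartition.beadPos_add_one_mem_occ_iff (hf : IsPartition f) (r : ℕ) :
    beadPos f r + 1 ∈ Occ f ↔ r ≠ 0 ∧ f (r - 1) = f r := by
  rw [occ_eq_range]
  constructor
  · rintro ⟨j, hj⟩
    have hjr : j < r := hf.beadPos_strictAnti.lt_iff_gt.mp (by omega)
    have := hf.beadPos_strictAnti.antitone (Nat.le_sub_one_of_lt hjr)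
    have := hf.1 (r - 1) r (Nat.sub_le r 1)
    simp only [beadPos] at *
    omega
  · rintro ⟨hr, hfr⟩
    exact ⟨r - 1, by simp only [beadPos]; omega⟩

theorem IsPartition.addRes_iff (hf : IsPartition f) (i : ZMod p) (r : ℕ) :
    AddRes p f i r ↔ ((beadPos f r + 1 : ℤ) : ZMod p) = i ∧ beadPos f r + 1 ∉ Occ f := by
  have hres : ((beadPos f r + 1 : ℤ) : ZMod p) = res p r (f r) := by
    simp only [beadPos, res]
    push_cast
    ring
  rw [hf.beadPos_add_one_mem_occ_iff, hres]
  have := hf.1 (r - 1) r (Nat.sub_le r 1)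
  constructor
  · rintro ⟨c, ⟨rfl, hc⟩, rfl⟩
    exact ⟨rfl, by omega⟩
  · rintro ⟨rfl, hr⟩
    exact ⟨f r, ⟨rfl, by omega⟩, rfl⟩

theorem IsPartition.beadPos_addAllF (hf : IsPartition f) (i : ZMod p) (r : ℕ) :
    beadPos (addAllF p i f) r = slideBead i (Occ f) (beadPos f r) := by
  by_cases h : AddRes p f i r
  · rw [slideBead, if_pos ((hf.addRes_iff i r).mp h)]
    simp only [addAllF, beadPos, h, if_true]
    push_cast
    ring
  · rw [slideBead, if_neg (mt (hf.addRes_iff i r).mpr h)]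
    simp [addAllF, beadPos, h]

theorem IsPartition.occ_addAllF (hf : IsPartition f) (i : ZMod p) :
    Occ (addAllF p i f) = slideBead i (Occ f) '' Occ f := by
  rw [occ_eq_range (addAllF p i f), funext (hf.beadPos_addAllF i), range_comp',
    ← occ_eq_range]

end AddAllF

section RunnerShift

variable {p : ℕ} {S T : Set ℤ} {a b : ZMod p} {c : ℤ} (hc : (c : ZMod p) = a - b)
  (hshift : ∀ x : ℤ, (x : ZMod p) = a → (x ∈ T ↔ x - c ∈ S))
include hc hshift

theorem setOf_runner_eq_image_add (O : Prop → Prop) (C : ℤ → Prop) :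
    {x | O (x ∈ T) ∧ (x : ZMod p) = a ∧ C x} =
      (· + c) '' {y | O (y ∈ S) ∧ (y : ZMod p) = b ∧ C (y + c)} := by
  ext x
  constructor
  · rintro ⟨hO, hxa, hC⟩
    refine ⟨x - c, ⟨by rwa [← hshift x hxa], ?_, by simpa using hC⟩, by simp⟩
    push_cast
    rw [hxa, hc]
    ring
  · rintro ⟨y, ⟨hO, hyb, hC⟩, rfl⟩
    have hya : ((y + c : ℤ) : ZMod p) = a := by
      push_cast
      rw [hyb, hc]
      ring
    exact ⟨by rwa [hshift _ hya, add_sub_cancel_right], hya, hC⟩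

theorem runnerCharge_add_of_shift (t : ℤ) :
    runnerCharge T a (t + c) = runnerCharge S b t + c := by
  have hbeads := setOf_runner_eq_image_add hc hshift id (t + c ≤ ·)
  have hspaces := setOf_runner_eq_image_add hc hshift Not (· < t + c)
  simp only [id, add_le_add_iff_right, add_lt_add_iff_right] at hbeads hspaces
  simp only [runnerCharge, hbeads, hspaces,
    ncard_image_of_injective _ (add_left_injective c)]
  ring

end RunnerShift

section PartitionShift

variable {p : ℕ} {f g : ℕ → ℕ} {a b : ZMod p} {c : ℤ} (hf : IsPartition f)
  (hc : (c : ZMod p) = a - b) (hshift : ∀ x : ℤ, (x : ZMod p) = a → (x ∈ Occ g ↔ x - c ∈ Occ f))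
include hf hc hshift

theorem nthBead_eq_add_of_shift [NeZero p] (k : ℕ) : nthBead p g a k = nthBead p f b k + c := by
  have hsSup (C : ℤ → Prop) (hne : {y | y ∈ Occ f ∧ (y : ZMod p) = b ∧ C y}.Nonempty) :
      sSup {x | x ∈ Occ g ∧ (x : ZMod p) = a ∧ C (x - c)} =
        sSup {y | y ∈ Occ f ∧ (y : ZMod p) = b ∧ C y} + c := by
    have hset := setOf_runner_eq_image_add hc hshift id (fun x => C (x - c))
    simp only [id, add_sub_cancel_right] at hset
    rw [hset]
    simpa using ((OrderIso.addRight c).map_csSup' hne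
      (hf.bddAbove_occ.mono fun _ hy => hy.1)).symm
  induction k with
  | zero =>
    obtain ⟨y, hy, hyb, -⟩ := hf.exists_mem_occ_lt b 0
    have := hsSup (fun _ => True) ⟨y, hy, hyb, trivial⟩
    simp only [and_true] at this
    exact this
  | succ k ih =>
    obtain ⟨y, hy, hyb, hlt⟩ := hf.exists_mem_occ_lt b (nthBead p f b k)
    have := hsSup (· < nthBead p f b k) ⟨y, hy, hyb, hlt⟩
    simp only [sub_lt_iff_lt_add] at this
    rw [nthBead, nthBead, ih]
    exact this

theorem quotFn_eq_of_shift [NeZero p] : quotFn p g a = quotFn p f b := by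
  funext k
  have hset := setOf_runner_eq_image_add hc hshift Not (· < nthBead p g a k)
  simp only [nthBead_eq_add_of_shift hf hc hshift, add_lt_add_iff_right] at hset
  simp only [quotFn, nthBead_eq_add_of_shift hf hc hshift k, hset,
    ncard_image_of_injective _ (add_left_injective c)]

theorem qpos_eq_add_of_shift [NeZero p] : qpos p g a = qpos p f b + c := by
  have hres : (((a.val : ℤ) - c : ℤ) : ZMod p) = b := by simp [hc]
  rw [qpos_eq_runnerCharge, ← sub_add_cancel (a.val : ℤ) c, runnerCharge_add_of_shift hc hshift,
    hf.runnerCharge_eq_qpos hres]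

end PartitionShift

/-- If `λ` is `p`-quotient-separated and `q_{i−1}(λ) > q_i(λ)`, and `μ = λ^{△i}`,
then the abacus display of `μ` is obtained from that of `λ` by swapping runners
`i−1` and `i`; consequently `μ^{(i)} = λ^{(i−1)}`, `μ^{(i−1)} = λ^{(i)}`,
`μ^{(j)} = λ^{(j)}` for other `j`, and `q_i(μ) = q_{i−1}(λ)+1`,
`q_{i−1}(μ) = q_i(λ)−1`, `q_j(μ) = q_j(λ)` for other `j`. -/
theorem stmt14 (p : ℕ) (hp : 2 ≤ p) (f : ℕ → ℕ) (hf : IsPartition f) (i : ZMod p)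
    (hqs : QSep p f) (hq : qpos p f i < qpos p f (i - 1)) :
    (∀ x : ℤ, (x : ZMod p) = i →
      ((x ∈ Occ (addAllF p i f) ↔ x - 1 ∈ Occ f) ∧
       (x - 1 ∈ Occ (addAllF p i f) ↔ x ∈ Occ f))) ∧
    quotFn p (addAllF p i f) i = quotFn p f (i - 1) ∧
    quotFn p (addAllF p i f) (i - 1) = quotFn p f i ∧
    (∀ j : ZMod p, j ≠ i → j ≠ i - 1 → quotFn p (addAllF p i f) j = quotFn p f j) ∧
    qpos p (addAllF p i f) i = qpos p f (i - 1) + 1 ∧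
    qpos p (addAllF p i f) (i - 1) = qpos p f i - 1 ∧
    (∀ j : ZMod p, j ≠ i → j ≠ i - 1 → qpos p (addAllF p i f) j = qpos p f j) := by
  have : NeZero p := ⟨by omega⟩
  have : Fact (1 < p) := ⟨hp⟩
  have hpred : ∀ x ∈ Occ f, (x : ZMod p) = i → x - 1 ∈ Occ f := fun _ hx hxi =>
    hf.sub_one_mem_occ_of_qSep hqs hq hx hxi
  have hg := hf.occ_addAllF i
  have Hi (x : ℤ) (hx : (x : ZMod p) = i) : x ∈ Occ (addAllF p i f) ↔ x - 1 ∈ Occ f := by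
    rw [hg, mem_image_slideBead_iff_of_eq hpred hx]
  have Hi₁ (x : ℤ) (hx : (x : ZMod p) = i - 1) :
      x ∈ Occ (addAllF p i f) ↔ x - -1 ∈ Occ f := by
    rw [hg, mem_image_slideBead_iff_of_eq_sub_one hpred hx, sub_neg_eq_add]
  have Hj (j : ZMod p) (hj : j ≠ i) (hj' : j ≠ i - 1) (x : ℤ) (hx : (x : ZMod p) = j) :
      x ∈ Occ (addAllF p i f) ↔ x - 0 ∈ Occ f := by
    rw [hg, mem_image_slideBead_iff_of_ne (hx ▸ hj) (hx ▸ hj'), sub_zero]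
  have hc₁ : ((1 : ℤ) : ZMod p) = i - (i - 1) := by simp
  have hc₂ : ((-1 : ℤ) : ZMod p) = i - 1 - i := by simp
  have hc₀ (j : ZMod p) : ((0 : ℤ) : ZMod p) = j - j := by simp
  refine ⟨fun x hx => ⟨Hi x hx, ?_⟩, quotFn_eq_of_shift hf hc₁ Hi,
    quotFn_eq_of_shift hf hc₂ Hi₁, fun j hj hj' => quotFn_eq_of_shift hf (hc₀ j) (Hj j hj hj'),
    qpos_eq_add_of_shift hf hc₁ Hi, ?_,
    fun j hj hj' => by simpa using qpos_eq_add_of_shift hf (hc₀ j) (Hj j hj hj')⟩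
  · simpa using Hi₁ (x - 1) (by push_cast; rw [hx])
  · simpa [sub_eq_add_neg] using qpos_eq_add_of_shift hf hc₂ Hi₁
end

section
/- Let p = 2h+1 be an odd prime and let λ be a self-conjugate partition. If 0 ≤ i < h and the partition λ^{▿±i} (obtained from λ by repeatedly removing all removable nodes of residue i and −i mod p) is an R-partition of type I, then λ is itself an R-partition of type I. -/
/-- The conjugate partition, as a parts function. -/
noncomputable def conjFn (f : ℕ → ℕ) : ℕ → ℕ :=
  fun c => Set.ncard {r : ℕ | c < f r}

/-- The number of boxes `|λ|` of a partition. -/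
noncomputable def psize (f : ℕ → ℕ) : ℕ := Set.ncard {q : ℕ × ℕ | Cell f q.1 q.2}

open Classical in
/-- One pass of removing all the removable nodes of `f` of residue `i` or `−i`. -/
noncomputable def stepPM (p : ℕ) (i : ZMod p) (f : ℕ → ℕ) : ℕ → ℕ :=
  fun r => f r - (if ∃ c, Removable f r c ∧ (res p r c = i ∨ res p r c = -i) then 1 else 0)

/-- `λ^{▿±i}`: the partition obtained from `λ` by repeatedly removing all removable
nodes of residue `i` and `−i` (iterating until no such nodes remain; `|λ|` passes
certainly suffice). -/
noncomputable def remPM (p : ℕ) (i : ZMod p) (f : ℕ → ℕ) : ℕ → ℕ :=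
  (stepPM p i)^[psize f] f

/-- `λ` is an R-partition of type I (abacus characterisation): `λ` is self-conjugate
and there is some `j ≥ 0` such that position `jp+h` of the abacus display is occupied
while all other positions later than `h−1` are vacant. -/
def RTypeI (p h : ℕ) (f : ℕ → ℕ) : Prop :=
  conjFn f = f ∧ ∃ j : ℕ, ((j : ℤ) * p + h ∈ Occ f ∧
    ∀ x : ℤ, (h : ℤ) - 1 < x → x ≠ (j : ℤ) * p + h → x ∉ Occ f)

/-!
Removing a node of residue `±i` from row `r` moves the abacus bead `λ_r − r − 1` one step
to the left, from a position of residue `±i`. As `±i − 1` is never `±i` when `0 ≤ i < h`, no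
row loses two nodes, so the abacus of `λ^{▿±i}` arises from that of `λ` by moving some beads at
positions `≡ ±i` one step left. Positions `≡ h` and `≡ h + 1` are not `≡ ±i`, so the single
bead at `jp + h` beyond `h − 1` in `λ^{▿±i}` is already the only such bead of `λ`.
-/

theorem ZMod.natCast_ne_natCast_of_lt {p a b : ℕ} (ha : a < p) (hb : b < p) (hab : a ≠ b) :
    (a : ZMod p) ≠ b := fun H =>
  hab (((ZMod.natCast_eq_natCast_iff a b p).1 H).eq_of_lt_of_lt ha hb)

section Residues

variable {p h i : ℕ}

theorem sub_one_not_pm_of_pm (hodd : p = 2 * h + 1) (hi : i < h) {a : ZMod p}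
    (ha : a = i ∨ a = -i) : ¬(a - 1 = i ∨ a - 1 = -i) := by
  rcases ha with rfl | rfl <;> rintro (H | H)
  · exact ZMod.natCast_ne_natCast_of_lt (p := p) (a := i) (b := i + 1)
      (by omega) (by omega) (by omega) (by push_cast; linear_combination H)
  · exact ZMod.natCast_ne_natCast_of_lt (p := p) (a := 2 * i) (b := 1)
      (by omega) (by omega) (by omega) (by push_cast; linear_combination H)
  · exact ZMod.natCast_ne_natCast_of_lt (p := p) (a := 2 * i + 1) (b := 0)
      (by omega) (by omega) (by omega) (by push_cast; linear_combination -H)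
  · exact ZMod.natCast_ne_natCast_of_lt (p := p) (a := 0) (b := 1)
      (by omega) (by omega) (by omega) (by push_cast; linear_combination H)

theorem natCast_not_pm (hodd : p = 2 * h + 1) (hi : i < h) :
    ¬((h : ZMod p) = i ∨ (h : ZMod p) = -i) := by
  rintro (H | H)
  · exact ZMod.natCast_ne_natCast_of_lt (by omega) (by omega) hi.ne' H
  · exact ZMod.natCast_ne_natCast_of_lt (p := p) (a := h + i) (b := 0)
      (by omega) (by omega) (by omega) (by push_cast; linear_combination H)

theorem natCast_add_one_not_pm (hodd : p = 2 * h + 1) (hi : i < h) :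
    ¬((h : ZMod p) + 1 = i ∨ (h : ZMod p) + 1 = -i) := by
  rintro (H | H)
  · exact ZMod.natCast_ne_natCast_of_lt (p := p) (a := h + 1) (b := i)
      (by omega) (by omega) (by omega) (by push_cast; linear_combination H)
  · exact ZMod.natCast_ne_natCast_of_lt (p := p) (a := h + 1 + i) (b := 0)
      (by omega) (by omega) (by omega) (by push_cast; linear_combination H)

end Residues

section Removal

variable {p : ℕ} {i : ZMod p}

theorem stepPM_apply_eq_or (g : ℕ → ℕ) (r : ℕ) :
    stepPM p i g r = g r ∨
      (stepPM p i g r + 1 = g r ∧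
        ((g r : ZMod p) - (r + 1) = i ∨ (g r : ZMod p) - (r + 1) = -i)) := by
  by_cases hE : ∃ c, Removable g r c ∧ (res p r c = i ∨ res p r c = -i)
  · have hstep : stepPM p i g r = g r - 1 := by simp only [stepPM, if_pos hE]
    obtain ⟨c, ⟨hc, -⟩, hres⟩ := hE
    have hres' : res p r c = (g r : ZMod p) - (r + 1) := by
      rw [res, ← hc]; push_cast; ring
    right
    exact ⟨by omega, hres' ▸ hres⟩
  · left
    simp only [stepPM, if_neg hE, Nat.sub_zero]

theorem stepPM_iterate_apply_eq_or
    (hgap : ∀ a : ZMod p, (a = i ∨ a = -i) → ¬(a - 1 = i ∨ a - 1 = -i))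
    (f : ℕ → ℕ) (n r : ℕ) :
    (stepPM p i)^[n] f r = f r ∨
      ((stepPM p i)^[n] f r + 1 = f r ∧
        ((f r : ZMod p) - (r + 1) = i ∨ (f r : ZMod p) - (r + 1) = -i)) := by
  induction n with
  | zero => exact Or.inl rfl
  | succ n ih =>
    rw [Function.iterate_succ_apply']
    set g := (stepPM p i)^[n] f
    rcases ih with hg | ⟨hg, hpm⟩
    · rw [← hg]
      exact stepPM_apply_eq_or g r
    · rcases stepPM_apply_eq_or g r with hstep | ⟨-, hpm'⟩
      · exact .inr (hstep ▸ ⟨hg, hpm⟩)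
      · refine absurd ?_ (hgap _ hpm)
        rwa [← hg, Nat.cast_succ, sub_right_comm, add_sub_cancel_right]

theorem mem_occ_or_of_mem_occ_stepPM_iterate
    (hgap : ∀ a : ZMod p, (a = i ∨ a = -i) → ¬(a - 1 = i ∨ a - 1 = -i))
    (f : ℕ → ℕ) (n : ℕ) {x : ℤ}
    (hx : x ∈ Occ ((stepPM p i)^[n] f)) :
    x ∈ Occ f ∨
      (x + 1 ∈ Occ f ∧ (((x + 1 : ℤ) : ZMod p) = i ∨ ((x + 1 : ℤ) : ZMod p) = -i)) := by
  obtain ⟨r, rfl⟩ := hx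
  rcases stepPM_iterate_apply_eq_or hgap f n r with hr | ⟨hr, hpm⟩
  · exact .inl ⟨r, by rw [hr]⟩
  · have hx : (((stepPM p i)^[n] f r : ℕ) : ℤ) - (r + 1) + 1 = (f r : ℤ) - (r + 1) := by
      omega
    rw [hx]
    push_cast
    exact .inr ⟨⟨r, rfl⟩, hpm⟩

theorem mem_occ_stepPM_iterate_or_of_mem_occ
    (hgap : ∀ a : ZMod p, (a = i ∨ a = -i) → ¬(a - 1 = i ∨ a - 1 = -i))
    (f : ℕ → ℕ) (n : ℕ) {x : ℤ} (hx : x ∈ Occ f) :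
    x ∈ Occ ((stepPM p i)^[n] f) ∨
      (x - 1 ∈ Occ ((stepPM p i)^[n] f) ∧ ((x : ZMod p) = i ∨ (x : ZMod p) = -i)) := by
  obtain ⟨r, rfl⟩ := hx
  rcases stepPM_iterate_apply_eq_or hgap f n r with hr | ⟨hr, hpm⟩
  · exact .inl ⟨r, by rw [hr]⟩
  · push_cast
    exact .inr ⟨⟨r, by omega⟩, hpm⟩

end Removal

theorem stmt16_general (p h : ℕ) (hodd : p = 2 * h + 1)
    (f : ℕ → ℕ) (hsc : conjFn f = f)
    (i : ℕ) (hi : i < h)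
    (hR : RTypeI p h (remPM p (i : ZMod p) f)) :
    RTypeI p h f := by
  obtain ⟨-, j, hocc, hvac⟩ := hR
  have hgap (a : ZMod p) := sub_one_not_pm_of_pm (a := a) hodd hi
  have hjh : ((j * p + h : ℤ) : ZMod p) = h := by simp
  refine ⟨hsc, j, ?_, fun x hx hxj hxf => ?_⟩
  · rcases mem_occ_or_of_mem_occ_stepPM_iterate hgap f _ hocc with hf | ⟨-, hpm⟩
    · exact hf
    · rw [Int.cast_add, hjh, Int.cast_one] at hpm
      exact absurd hpm (natCast_add_one_not_pm hodd hi)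
  rcases mem_occ_stepPM_iterate_or_of_mem_occ hgap f (psize f) hxf with hg | ⟨hg, hpm⟩
  · exact hvac x hx hxj hg
  have hxh : x ≠ h := by
    rintro rfl
    exact natCast_not_pm hodd hi (by simpa using hpm)
  have hxj' : x - 1 ≠ j * p + h := by
    intro hx1
    rw [eq_add_of_sub_eq hx1, Int.cast_add, hjh, Int.cast_one] at hpm
    exact natCast_add_one_not_pm hodd hi hpm
  exact hvac (x - 1) (by omega) hxj' hg

/-- Let `p = 2h+1` be an odd prime and `λ` self-conjugate. If `0 ≤ i < h` and
`λ^{▿±i}` is an R-partition of type I, then so is `λ`. -/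
theorem stmt16 (p h : ℕ) (hp : p.Prime) (hodd : p = 2 * h + 1)
    (f : ℕ → ℕ) (hf : IsPartition f) (hsc : conjFn f = f)
    (i : ℕ) (hi : i < h)
    (hR : RTypeI p h (remPM p (i : ZMod p) f)) :
    RTypeI p h f :=
  stmt16_general p h hodd f hsc i hi hR
end

section
/- Let λ be a partition, let Re(λ) be the λ-tableau of type λ^rest in which the entry at node (x,y) is x plus the number of nodes below (x,y) in the same ramp which are not nodes of λ. If (a,b) and (c,d) are nodes of λ with (p−1)a + b ≤ (p−1)c + d, then Re(λ)_{a,b} ≤ Re(λ)_{c,d} when a = c, and Re(λ)_{a,b} < Re(λ)_{c,d} when a < c. In particular, Re(λ) is a semistandard tableau. -/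
/-- The tableau `Re(λ)` (with 0-indexed row entries): the entry at node `(r, c)` is
`r` plus the number of nodes below `(r, c)` in the same ramp which are not nodes of
`λ`; i.e. the row to which the node `(r, c)` moves when `λ^rest` is formed. -/
noncomputable def ReT (p : ℕ) (f : ℕ → ℕ) (r c : ℕ) : ℕ :=
  r + Set.ncard {q : ℕ × ℕ | r < q.1 ∧ rampOf p q.1 q.2 = rampOf p r c ∧ ¬ Cell f q.1 q.2}

/-!
For nodes `(a, b)`, `(c, d)` with `a ≤ c` and the ramp of `(a, b)` no later than that of `(c, d)`,
the non-nodes below `(a, b)` in its ramp split into those in rows `a < q < c` (at most one per row)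
and those below row `c`; shifting the latter right onto the ramp of `(c, d)` keeps them non-nodes.
Hence `Re(λ)_{a,b} - a ≤ (c - a - 1) + (Re(λ)_{c,d} - c)`, with `c - a - 1` truncated to `0`
when `a = c`, which gives both inequalities.
-/

def gapsBelow (p : ℕ) (f : ℕ → ℕ) (r c : ℕ) : Set (ℕ × ℕ) :=
  {q : ℕ × ℕ | r < q.1 ∧ rampOf p q.1 q.2 = rampOf p r c ∧ ¬ Cell f q.1 q.2}

theorem ReT_eq (p : ℕ) (f : ℕ → ℕ) (r c : ℕ) : ReT p f r c = r + (gapsBelow p f r c).ncard :=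
  rfl

theorem injOn_fst_rampOf_eq (p : ℕ) (k : ℤ) :
    Set.InjOn Prod.fst {q : ℕ × ℕ | rampOf p q.1 q.2 = k} := by
  rintro ⟨r, c⟩ hq ⟨r', c'⟩ hq' (rfl : r = r')
  simp only [Set.mem_ofPred_eq, rampOf] at hq hq'
  simp only [Prod.mk.injEq, true_and]
  omega

theorem gapsBelow_finite {p : ℕ} (hp : 2 ≤ p) (f : ℕ → ℕ) (r c : ℕ) :
    (gapsBelow p f r c).Finite := by
  refine (Set.finite_Iic (r + c)).subset ?_ |>.of_finite_image
    ((injOn_fst_rampOf_eq p (rampOf p r c)).mono fun q hq => hq.2.1)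
  rintro _ ⟨⟨q₁, q₂⟩, ⟨hr, hramp, -⟩, rfl⟩
  have hp' : (2 : ℤ) ≤ p := by exact_mod_cast hp
  have hr' : (r : ℤ) + 1 ≤ q₁ := by exact_mod_cast hr
  simp only [rampOf] at hramp
  simp only [Set.mem_Iic]
  -- `(p - 1) (q₁ - r) = c - q₂ ≤ c` and `p - 1 ≥ 1`
  have : (q₁ : ℤ) ≤ r + c := by nlinarith [Int.natCast_nonneg q₂]
  exact_mod_cast this

/-- Gaps of `(a, b)` in the rows up to `c` lie in distinct rows strictly between `a` and `c`:
the ramp of `(a, b)` meets row `c` at or left of the node `(c, d)`. -/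
theorem ncard_gapsBelow_inter_le (p : ℕ) {f : ℕ → ℕ} {a b c d : ℕ} (hcd : Cell f c d)
    (hramp : rampOf p a b ≤ rampOf p c d) :
    (gapsBelow p f a b ∩ {q | q.1 ≤ c}).ncard ≤ c - a - 1 := by
  rw [← Set.ncard_Ioo_nat]
  refine Set.ncard_le_ncard_of_injOn Prod.fst ?_
    ((injOn_fst_rampOf_eq p (rampOf p a b)).mono fun q hq => hq.1.2.1) (Set.finite_Ioo a c)
  rintro ⟨q₁, q₂⟩ ⟨⟨ha, hq, hgap⟩, hc⟩
  refine ⟨ha, lt_of_le_of_ne hc ?_⟩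
  rintro rfl
  refine hgap (lt_of_le_of_lt ?_ hcd)
  simp only [rampOf] at hq hramp
  omega

theorem ncard_gapsBelow_diff_le {p : ℕ} (hp : 2 ≤ p) (f : ℕ → ℕ) {a b c d : ℕ}
    (hramp : rampOf p a b ≤ rampOf p c d) :
    (gapsBelow p f a b \ {q | q.1 ≤ c}).ncard ≤ (gapsBelow p f c d).ncard := by
  obtain ⟨δ, hδ⟩ : ∃ δ : ℕ, rampOf p c d = rampOf p a b + δ :=
    ⟨(rampOf p c d - rampOf p a b).toNat, by omega⟩
  refine Set.ncard_le_ncard_of_injOn (fun q => (q.1, q.2 + δ)) ?_ ?_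
    (gapsBelow_finite hp f c d)
  · rintro ⟨q₁, q₂⟩ ⟨⟨-, hq, hgap⟩, hc⟩
    refine ⟨not_le.mp hc, ?_, fun h => hgap (lt_of_le_of_lt (Nat.le_add_right q₂ δ) h)⟩
    simp only [rampOf] at hq hδ ⊢
    push_cast
    omega
  · rintro ⟨q₁, q₂⟩ - ⟨q₁', q₂'⟩ - h
    simp only [Prod.mk.injEq, Nat.add_right_cancel_iff] at h
    rw [h.1, h.2]

theorem ncard_gapsBelow_le {p : ℕ} (hp : 2 ≤ p) {f : ℕ → ℕ} {a b c d : ℕ} (hcd : Cell f c d)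
    (hramp : rampOf p a b ≤ rampOf p c d) :
    (gapsBelow p f a b).ncard ≤ c - a - 1 + (gapsBelow p f c d).ncard := by
  rw [← Set.ncard_inter_add_ncard_sdiff_eq_ncard _ {q | q.1 ≤ c} (gapsBelow_finite hp f a b)]
  exact add_le_add (ncard_gapsBelow_inter_le p hcd hramp) (ncard_gapsBelow_diff_le hp f hramp)

theorem ReT_le_ReT_of_rampOf_le {p : ℕ} (hp : 2 ≤ p) {f : ℕ → ℕ} {r b d : ℕ}
    (hd : Cell f r d) (hramp : rampOf p r b ≤ rampOf p r d) : ReT p f r b ≤ ReT p f r d := by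
  have := ncard_gapsBelow_le hp hd hramp
  rw [ReT_eq, ReT_eq]
  omega

theorem ReT_lt_ReT_of_rampOf_le {p : ℕ} (hp : 2 ≤ p) {f : ℕ → ℕ} {a b c d : ℕ} (hac : a < c)
    (hcd : Cell f c d) (hramp : rampOf p a b ≤ rampOf p c d) : ReT p f a b < ReT p f c d := by
  have := ncard_gapsBelow_le hp hcd hramp
  rw [ReT_eq, ReT_eq]
  omega

theorem stmt19_general (p : ℕ) (hp : 2 ≤ p) (f : ℕ → ℕ) :
    (∀ a b c d : ℕ, Cell f a b → Cell f c d → rampOf p a b ≤ rampOf p c d →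
        ((a = c → ReT p f a b ≤ ReT p f c d) ∧ (a < c → ReT p f a b < ReT p f c d))) ∧
    (∀ r c : ℕ, Cell f r c → Cell f r (c + 1) → ReT p f r c ≤ ReT p f r (c + 1)) ∧
    (∀ r c : ℕ, Cell f r c → Cell f (r + 1) c → ReT p f r c < ReT p f (r + 1) c) := by
  have hp' : (2 : ℤ) ≤ p := by exact_mod_cast hp
  refine ⟨fun a b c d _ hcd hramp =>
      ⟨fun hac => by subst hac; exact ReT_le_ReT_of_rampOf_le hp hcd hramp,
        fun hac => ReT_lt_ReT_of_rampOf_le hp hac hcd hramp⟩,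
    fun r c _ hc => ReT_le_ReT_of_rampOf_le hp hc ?_,
    fun r c _ hc => ReT_lt_ReT_of_rampOf_le hp r.lt_succ_self hc ?_⟩
  all_goals simp only [rampOf]; push_cast; linarith

/-- If `(a,b)` and `(c,d)` are nodes of `λ` with the ramp of `(a,b)` no later than
the ramp of `(c,d)`, then `Re(λ)_{a,b} ≤ Re(λ)_{c,d}` when `a = c` and
`Re(λ)_{a,b} < Re(λ)_{c,d}` when `a < c`. In particular `Re(λ)` is semistandard. -/
theorem stmt19 (p : ℕ) (hp : 2 ≤ p) (f : ℕ → ℕ) (hf : IsPartition f) :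
    (∀ a b c d : ℕ, Cell f a b → Cell f c d → rampOf p a b ≤ rampOf p c d →
        ((a = c → ReT p f a b ≤ ReT p f c d) ∧ (a < c → ReT p f a b < ReT p f c d))) ∧
    (∀ r c : ℕ, Cell f r c → Cell f r (c + 1) → ReT p f r c ≤ ReT p f r (c + 1)) ∧
    (∀ r c : ℕ, Cell f r c → Cell f (r + 1) c → ReT p f r c < ReT p f (r + 1) c) :=
  stmt19_general p hp f
end
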